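/- Under the isomorphism θ : A_f → Mat₂(A_{f'}) of the preceding construction (f the quadric intersection associated to the binary quartic f'), the central elements satisfy θ(ξ) = (ξ'+c)I₂ and θ(η) = −η'I₂, where ξ',η' are the central elements of A_{f'} and ξ,η those of A_f. -/
import Mathlib


/-- The relations defining the algebra `A_f` associated to the binary quartic
`f = a x⁴ + b x³ z + c x² z² + d x z³ + e z⁴`: the quotient of the free algebra on
generators `r = ι 0`, `s = ι 1`, `t = ι 2` by the two-sided ideal generated by
`r²−a`, `rs+sr−b`, `rt+tr+s²−c`, `st+ts−d`, `t²−e`. -/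
def bqRel (K : Type*) [Field K] (a b c d e : K) :
    FreeAlgebra K (Fin 3) → FreeAlgebra K (Fin 3) → Prop := fun x y =>
  y = 0 ∧ (
    x = FreeAlgebra.ι K 0 * FreeAlgebra.ι K 0 - algebraMap K _ a ∨
    x = FreeAlgebra.ι K 0 * FreeAlgebra.ι K 1 + FreeAlgebra.ι K 1 * FreeAlgebra.ι K 0
        - algebraMap K _ b ∨
    x = FreeAlgebra.ι K 0 * FreeAlgebra.ι K 2 + FreeAlgebra.ι K 2 * FreeAlgebra.ι K 0
        + FreeAlgebra.ι K 1 * FreeAlgebra.ι K 1 - algebraMap K _ c ∨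
    x = FreeAlgebra.ι K 1 * FreeAlgebra.ι K 2 + FreeAlgebra.ι K 2 * FreeAlgebra.ι K 1
        - algebraMap K _ d ∨
    x = FreeAlgebra.ι K 2 * FreeAlgebra.ι K 2 - algebraMap K _ e)

/-- The algebra `A_f` associated to a binary quartic. -/
def BQAlg (K : Type*) [Field K] (a b c d e : K) := RingQuot (bqRel K a b c d e)

noncomputable instance (K : Type*) [Field K] (a b c d e : K) : Ring (BQAlg K a b c d e) :=
  inferInstanceAs (Ring (RingQuot _))

noncomputable instance (K : Type*) [Field K] (a b c d e : K) : Algebra K (BQAlg K a b c d e) :=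
  inferInstanceAs (Algebra K (RingQuot _))

/-- The generator `r` of `A_f`. -/
noncomputable def bqR (K : Type*) [Field K] (a b c d e : K) : BQAlg K a b c d e :=
  RingQuot.mkAlgHom K (bqRel K a b c d e) (FreeAlgebra.ι K 0)

/-- The generator `s` of `A_f`. -/
noncomputable def bqS (K : Type*) [Field K] (a b c d e : K) : BQAlg K a b c d e :=
  RingQuot.mkAlgHom K (bqRel K a b c d e) (FreeAlgebra.ι K 1)

/-- The generator `t` of `A_f`. -/
noncomputable def bqT (K : Type*) [Field K] (a b c d e : K) : BQAlg K a b c d e :=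
  RingQuot.mkAlgHom K (bqRel K a b c d e) (FreeAlgebra.ι K 2)


/-- The relations defining the algebra `A_f` associated to a pair of quadratic forms
`f₁ = Σ_{i≤j} aᵢⱼ xᵢxⱼ`, `f₂ = Σ_{i≤j} bᵢⱼ xᵢxⱼ` in four variables.  The coefficient
vectors `a b : Fin 10 → K` list the coefficients of the monomials in the order
`x₁², x₁x₂, x₁x₃, x₁x₄, x₂², x₂x₃, x₂x₄, x₃², x₃x₄, x₄²`.  The generators are
`p = ι 0`, `q = ι 1`, `r = ι 2`, `s = ι 3`, and the relations derive from
`fᵢ(αp+βr, αq+βs, α, β) = 0` (`i = 1,2`) together with `[αp+βr, αq+βs] = 0`. -/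
def qiRel (K : Type*) [Field K] (a b : Fin 10 → K) :
    FreeAlgebra K (Fin 4) → FreeAlgebra K (Fin 4) → Prop := fun u v =>
  letI p := FreeAlgebra.ι K (0 : Fin 4)
  letI q := FreeAlgebra.ι K (1 : Fin 4)
  letI r := FreeAlgebra.ι K (2 : Fin 4)
  letI s := FreeAlgebra.ι K (3 : Fin 4)
  letI c : K → FreeAlgebra K (Fin 4) := algebraMap K _
  v = 0 ∧ (
    u = c (a 0) * p ^ 2 + c (a 1) * (p * q) + c (a 4) * q ^ 2
        + c (a 2) * p + c (a 5) * q + c (a 7) ∨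
    u = c (a 0) * (p * r + r * p) + c (a 1) * (p * s + r * q) + c (a 4) * (q * s + s * q)
        + c (a 3) * p + c (a 6) * q + c (a 2) * r + c (a 5) * s + c (a 8) ∨
    u = c (a 0) * r ^ 2 + c (a 1) * (r * s) + c (a 4) * s ^ 2
        + c (a 3) * r + c (a 6) * s + c (a 9) ∨
    u = c (b 0) * p ^ 2 + c (b 1) * (p * q) + c (b 4) * q ^ 2
        + c (b 2) * p + c (b 5) * q + c (b 7) ∨
    u = c (b 0) * (p * r + r * p) + c (b 1) * (p * s + r * q) + c (b 4) * (q * s + s * q)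
        + c (b 3) * p + c (b 6) * q + c (b 2) * r + c (b 5) * s + c (b 8) ∨
    u = c (b 0) * r ^ 2 + c (b 1) * (r * s) + c (b 4) * s ^ 2
        + c (b 3) * r + c (b 6) * s + c (b 9) ∨
    u = p * q - q * p ∨
    u = p * s + r * q - q * r - s * p ∨
    u = r * s - s * r)

/-- The algebra `A_f` associated to a pair of quadratic forms in four variables. -/
def QIAlg (K : Type*) [Field K] (a b : Fin 10 → K) := RingQuot (qiRel K a b)

noncomputable instance (K : Type*) [Field K] (a b : Fin 10 → K) : Ring (QIAlg K a b) :=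
  inferInstanceAs (Ring (RingQuot _))

noncomputable instance (K : Type*) [Field K] (a b : Fin 10 → K) : Algebra K (QIAlg K a b) :=
  inferInstanceAs (Algebra K (RingQuot _))

/-- The generator `p` of the quadric intersection algebra. -/
noncomputable def qiP (K : Type*) [Field K] (a b : Fin 10 → K) : QIAlg K a b :=
  RingQuot.mkAlgHom K _ (FreeAlgebra.ι K 0)

/-- The generator `q` of the quadric intersection algebra. -/
noncomputable def qiQ (K : Type*) [Field K] (a b : Fin 10 → K) : QIAlg K a b :=
  RingQuot.mkAlgHom K _ (FreeAlgebra.ι K 1)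

/-- The generator `r` of the quadric intersection algebra. -/
noncomputable def qiR (K : Type*) [Field K] (a b : Fin 10 → K) : QIAlg K a b :=
  RingQuot.mkAlgHom K _ (FreeAlgebra.ι K 2)

/-- The generator `s` of the quadric intersection algebra. -/
noncomputable def qiS (K : Type*) [Field K] (a b : Fin 10 → K) : QIAlg K a b :=
  RingQuot.mkAlgHom K _ (FreeAlgebra.ι K 3)

/-- `d i j = aᵢ bⱼ − aⱼ bᵢ` (1-based indices, as in the paper). -/
def qiD (K : Type*) [Field K] (a b : Fin 10 → K) (i j : Fin 10) : K :=
  a i * b j - a j * b i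

/-- The element `pᵢ = d₁ᵢp + d₂ᵢq + d₃ᵢ` of the quadric intersection algebra
(`i` is the 0-based index corresponding to the paper's 1-based subscript). -/
noncomputable def qiPel (K : Type*) [Field K] (a b : Fin 10 → K) (i : Fin 10) : QIAlg K a b :=
  algebraMap K _ (qiD K a b 0 i) * qiP K a b + algebraMap K _ (qiD K a b 1 i) * qiQ K a b
    + algebraMap K _ (qiD K a b 2 i)

/-- The element `rᵢ = d₁ᵢr + d₂ᵢs + d₄ᵢ`. -/
noncomputable def qiRel' (K : Type*) [Field K] (a b : Fin 10 → K) (i : Fin 10) : QIAlg K a b :=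
  algebraMap K _ (qiD K a b 0 i) * qiR K a b + algebraMap K _ (qiD K a b 1 i) * qiS K a b
    + algebraMap K _ (qiD K a b 3 i)

/-- The element `qᵢ = d₂ᵢp + d₅ᵢq + d₆ᵢ`. -/
noncomputable def qiQel (K : Type*) [Field K] (a b : Fin 10 → K) (i : Fin 10) : QIAlg K a b :=
  algebraMap K _ (qiD K a b 1 i) * qiP K a b + algebraMap K _ (qiD K a b 4 i) * qiQ K a b
    + algebraMap K _ (qiD K a b 5 i)

/-- The element `sᵢ = d₂ᵢr + d₅ᵢs + d₇ᵢ`. -/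
noncomputable def qiSel (K : Type*) [Field K] (a b : Fin 10 → K) (i : Fin 10) : QIAlg K a b :=
  algebraMap K _ (qiD K a b 1 i) * qiR K a b + algebraMap K _ (qiD K a b 4 i) * qiS K a b
    + algebraMap K _ (qiD K a b 6 i)

/-- The element `t = qr − ps` of the quadric intersection algebra. -/
noncomputable def qiT' (K : Type*) [Field K] (a b : Fin 10 → K) : QIAlg K a b :=
  qiQ K a b * qiR K a b - qiP K a b * qiS K a b

/-- The central element `ξ` of the quadric intersection algebra (Section 3.3 of the paper). -/
noncomputable def qiXi (K : Type*) [Field K] (a b : Fin 10 → K) : QIAlg K a b :=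
  letI α : K → QIAlg K a b := algebraMap K _
  letI dd := qiD K a b
  letI p := qiP K a b
  letI q := qiQ K a b
  letI r := qiR K a b
  letI s := qiS K a b
  letI t := qiT' K a b
  (qiPel K a b 4 * s) ^ 2 + (qiSel K a b 0 * p) ^ 2
    + (α (dd 4 5) * qiPel K a b 3 + α (dd 1 8) * qiPel K a b 4
        + α (dd 2 6) * qiPel K a b 4 - α (dd 1 6) * qiPel K a b 5) * s
    - α (dd 4 5) * (α (dd 0 2) * r + α (dd 1 2) * s - α (dd 0 6) * q
        + α (dd 0 1) * t - α (dd 0 8)) * s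
    + (α (dd 0 3) * qiSel K a b 5 + α (dd 1 8) * qiSel K a b 0
        - α (dd 2 6) * qiSel K a b 0 - α (dd 1 2) * qiSel K a b 3) * p
    - α (dd 0 3) * (α (dd 1 6) * p + α (dd 4 6) * q + α (dd 2 4) * r
        - α (dd 1 4) * t - α (dd 4 8)) * p


/-! ### Auxiliary lemmas -/

section BQRelations
variable {K : Type*} [Field K] (a b c d e : K)

lemma bq_rr : bqR K a b c d e * bqR K a b c d e = algebraMap K _ a := by
  have h := RingQuot.mkAlgHom_rel K (s := bqRel K a b c d e) ⟨rfl, Or.inl rfl⟩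
  rw [map_sub, map_mul, map_zero, AlgHom.commutes, sub_eq_zero] at h
  exact h

lemma bq_rs : bqR K a b c d e * bqS K a b c d e + bqS K a b c d e * bqR K a b c d e
    = algebraMap K _ b := by
  have h := RingQuot.mkAlgHom_rel K (s := bqRel K a b c d e) ⟨rfl, Or.inr (Or.inl rfl)⟩
  rw [map_sub, map_add, map_mul, map_mul, map_zero, AlgHom.commutes, sub_eq_zero] at h
  exact h

lemma bq_rt : bqR K a b c d e * bqT K a b c d e + bqT K a b c d e * bqR K a b c d e
    + bqS K a b c d e * bqS K a b c d e = algebraMap K _ c := by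
  have h := RingQuot.mkAlgHom_rel K (s := bqRel K a b c d e) ⟨rfl, Or.inr (Or.inr (Or.inl rfl))⟩
  rw [map_sub, map_add, map_add, map_mul, map_mul, map_mul, map_zero, AlgHom.commutes,
    sub_eq_zero] at h
  exact h

lemma bq_st : bqS K a b c d e * bqT K a b c d e + bqT K a b c d e * bqS K a b c d e
    = algebraMap K _ d := by
  have h := RingQuot.mkAlgHom_rel K (s := bqRel K a b c d e)
    ⟨rfl, Or.inr (Or.inr (Or.inr (Or.inl rfl)))⟩
  rw [map_sub, map_add, map_mul, map_mul, map_zero, AlgHom.commutes, sub_eq_zero] at h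
  exact h

lemma bq_tt : bqT K a b c d e * bqT K a b c d e = algebraMap K _ e := by
  have h := RingQuot.mkAlgHom_rel K (s := bqRel K a b c d e)
    ⟨rfl, Or.inr (Or.inr (Or.inr (Or.inr rfl)))⟩
  rw [map_sub, map_mul, map_zero, AlgHom.commutes, sub_eq_zero] at h
  exact h

end BQRelations

section QIAux
variable {K : Type*} [Field K] (a b c d e : K)

local notation "qav" => (![1,0,0,0,0,0,0,0,-1,0] : Fin 10 → K)
local notation "qbv" => (![0,0,-b,-d,1,0,0,-a,-c,-e] : Fin 10 → K)

lemma xi_eq :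
    qiXi K qav qbv
      = (qiP K qav qbv * qiS K qav qbv)^2 + (qiS K qav qbv * qiP K qav qbv)^2
        - algebraMap K _ d * qiP K qav qbv := by
  have h45 : qiD K qav qbv 4 5 = 0 := by
    show (0:K) * 0 - 0 * 1 = 0; ring
  have h18 : qiD K qav qbv 1 8 = 0 := by
    show (0:K) * (-c) - (-1) * 0 = 0; ring
  have h26 : qiD K qav qbv 2 6 = 0 := by
    show (0:K) * 0 - 0 * (-b) = 0; ring
  have h16 : qiD K qav qbv 1 6 = 0 := by
    show (0:K) * 0 - 0 * 0 = 0; ring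
  have h12 : qiD K qav qbv 1 2 = 0 := by
    show (0:K) * (-b) - 0 * 0 = 0; ring
  have h03 : qiD K qav qbv 0 3 = -d := by
    show (1:K) * (-d) - 0 * 0 = -d; ring
  have h46 : qiD K qav qbv 4 6 = 0 := by
    show (0:K) * 0 - 0 * 1 = 0; ring
  have h24 : qiD K qav qbv 2 4 = 0 := by
    show (0:K) * 1 - 0 * (-b) = 0; ring
  have h14 : qiD K qav qbv 1 4 = 0 := by
    show (0:K) * 1 - 0 * 0 = 0; ring
  have h48 : qiD K qav qbv 4 8 = 1 := by
    show (0:K) * (-c) - (-1) * 1 = 1; ring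
  have h13 : qiD K qav qbv 1 3 = 0 := by
    show (0:K) * (-d) - 0 * 0 = 0; ring
  have h23 : qiD K qav qbv 2 3 = 0 := by
    show (0:K) * (-d) - 0 * (-b) = 0; ring
  have h04 : qiD K qav qbv 0 4 = 1 := by
    show (1:K) * 1 - 0 * 0 = 1; ring
  have h05 : qiD K qav qbv 0 5 = 0 := by
    show (1:K) * 0 - 0 * 0 = 0; ring
  have h15 : qiD K qav qbv 1 5 = 0 := by
    show (0:K) * 0 - 0 * 0 = 0; ring
  have h25 : qiD K qav qbv 2 5 = 0 := by
    show (0:K) * 0 - 0 * (-b) = 0; ring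
  have h10 : qiD K qav qbv 1 0 = 0 := by
    show (0:K) * 0 - 1 * 0 = 0; ring
  have h40 : qiD K qav qbv 4 0 = -1 := by
    show (0:K) * 0 - 1 * 1 = -1; ring
  have h60 : qiD K qav qbv 6 0 = 0 := by
    show (0:K) * 0 - 1 * 0 = 0; ring
  have h43 : qiD K qav qbv 4 3 = 0 := by
    show (0:K) * (-d) - 0 * 1 = 0; ring
  have h63 : qiD K qav qbv 6 3 = 0 := by
    show (0:K) * (-d) - 0 * 0 = 0; ring
  have h65 : qiD K qav qbv 6 5 = 0 := by
    show (0:K) * 0 - 0 * 0 = 0; ring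
  have h01 : qiD K qav qbv 0 1 = 0 := by
    show (1:K) * 0 - 0 * 0 = 0; ring
  have h02 : qiD K qav qbv 0 2 = -b := by
    show (1:K) * (-b) - 0 * 0 = -b; ring
  have h06 : qiD K qav qbv 0 6 = 0 := by
    show (1:K) * 0 - 0 * 0 = 0; ring
  have h08 : qiD K qav qbv 0 8 = -c := by
    show (1:K) * (-c) - (-1) * 0 = -c; ring
  simp only [qiXi, qiPel, qiSel, qiT', h45, h18, h26, h16, h12, h03, h46, h24, h14, h48,
    h13, h23, h04, h05, h15, h25, h10, h40, h60, h43, h63, h65, h01, h02, h06, h08,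
    map_zero, map_one, map_neg, zero_mul, mul_zero, zero_add, add_zero, one_mul,
    neg_mul, sub_zero, zero_sub, mul_one, neg_neg, mul_neg]
  noncomm_ring

lemma eps_eq :
    algebraMap K (QIAlg K qav qbv) (qiD K qav qbv 0 1)
        * (qiP K qav qbv * qiR K qav qbv + qiR K qav qbv * qiP K qav qbv)
      + algebraMap K (QIAlg K qav qbv) (qiD K qav qbv 0 4)
        * (qiP K qav qbv * qiS K qav qbv + qiQ K qav qbv * qiR K qav qbv
            + qiS K qav qbv * qiP K qav qbv + qiR K qav qbv * qiQ K qav qbv)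
      + algebraMap K (QIAlg K qav qbv) (qiD K qav qbv 1 4)
        * (qiQ K qav qbv * qiS K qav qbv + qiS K qav qbv * qiQ K qav qbv)
    = qiP K qav qbv * qiS K qav qbv + qiQ K qav qbv * qiR K qav qbv
        + qiS K qav qbv * qiP K qav qbv + qiR K qav qbv * qiQ K qav qbv := by
  have h01 : qiD K qav qbv 0 1 = 0 := by
    show (1:K) * 0 - 0 * 0 = 0; ring
  have h04 : qiD K qav qbv 0 4 = 1 := by
    show (1:K) * 1 - 0 * 0 = 1; ring
  have h14 : qiD K qav qbv 1 4 = 0 := by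
    show (0:K) * 1 - 0 * 0 = 0; ring
  rw [h01, h04, h14]
  simp

end QIAux

section MatHelpers
variable {α : Type*}

lemma addf [AddCommMonoid α] (a b c d a' b' c' d' : α) :
    !![a,b;c,d] + !![a',b';c',d'] = !![a+a', b+b'; c+c', d+d'] := by
  ext i j; fin_cases i <;> fin_cases j <;> simp

lemma subf [AddCommGroup α] (a b c d a' b' c' d' : α) :
    !![a,b;c,d] - !![a',b';c',d'] = !![a-a', b-b'; c-c', d-d'] := by
  ext i j; fin_cases i <;> fin_cases j <;> simp

lemma smulf {R : Type*} [Zero α] [SMulZeroClass R α] (k : R) (a b c d : α) :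
    k • (!![a,b;c,d] : Matrix (Fin 2) (Fin 2) α) = !![k•a, k•b; k•c, k•d] := by
  ext i j; fin_cases i <;> fin_cases j <;> simp

lemma matlit_eq {a b c d a' b' c' d' : α} (h1 : a = a') (h2 : b = b')
    (h3 : c = c') (h4 : d = d') : !![a,b;c,d] = !![a',b';c',d'] := by
  rw [h1, h2, h3, h4]

end MatHelpers

section MatComputations
variable {K : Type*} [Field K] (a b c d e : K)
local notation "r'" => bqR K a b c d e
local notation "s'" => bqS K a b c d e
local notation "t'" => bqT K a b c d e
local notation "P" => (!![0,1;0,0] : Matrix (Fin 2) (Fin 2) (BQAlg K a b c d e))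
local notation "Q" => (!![r',s';0,r'] : Matrix (Fin 2) (Fin 2) (BQAlg K a b c d e))
local notation "R" => (!![0,0;1,0] : Matrix (Fin 2) (Fin 2) (BQAlg K a b c d e))
local notation "S" => (!![t',0;s',t'] : Matrix (Fin 2) (Fin 2) (BQAlg K a b c d e))
local notation "Δ" => (!![r',0;0,-r'] : Matrix (Fin 2) (Fin 2) (BQAlg K a b c d e))
local notation "Am" => (algebraMap K (BQAlg K a b c d e))

lemma mat_xi :
    (P * S)^2 + (S * P)^2 - algebraMap K _ d * P = !![s'^2, 0; 0, s'^2] := by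
  have hts : t' * s' = algebraMap K _ d - s' * t' := by
    rw [← bq_st a b c d e]; abel
  have halgm : ∀ (x : K) (M : Matrix (Fin 2) (Fin 2) (BQAlg K a b c d e)) (i j : Fin 2),
      (algebraMap K (Matrix (Fin 2) (Fin 2) (BQAlg K a b c d e)) x * M) i j
        = Am x * M i j := by
    intro x M i j
    rw [← Algebra.smul_def, Matrix.smul_apply, Algebra.smul_def]
  rw [sq, sq, Matrix.mul_fin_two, Matrix.mul_fin_two, Matrix.mul_fin_two, Matrix.mul_fin_two]
  ext i j
  fin_cases i <;> fin_cases j <;> simp [halgm, hts, sq]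

lemma mat_delta (h2 : (2:K) ≠ 0) :
    (2:K)⁻¹ • (P * (P*S + Q*R + S*P + R*Q) - (P*S + Q*R + S*P + R*Q) * P)
      = !![r', 0; 0, -r'] := by
  have key : P * (P*S + Q*R + S*P + R*Q) - (P*S + Q*R + S*P + R*Q) * P
      = !![r'+r', 0; 0, -r'+-r'] := by
    rw [Matrix.mul_fin_two, Matrix.mul_fin_two, Matrix.mul_fin_two, Matrix.mul_fin_two,
      addf, addf, addf, Matrix.mul_fin_two, Matrix.mul_fin_two, subf]
    exact matlit_eq (by noncomm_ring) (by noncomm_ring) (by noncomm_ring) (by noncomm_ring)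
  rw [key, smulf]
  exact matlit_eq
    (by rw [← two_smul K, smul_smul, inv_mul_cancel₀ h2, one_smul])
    (smul_zero _) (smul_zero _)
    (by rw [← two_smul K, smul_smul, inv_mul_cancel₀ h2, one_smul])

set_option maxHeartbeats 1000000 in
lemma mat_eta (h2 : (2:K) ≠ 0) :
    (2:K)⁻¹ • (Δ * S * (P * S) + P * S * (Δ * S) + (S * Δ * (S * P) + S * P * (S * Δ))
        - algebraMap K (Matrix (Fin 2) (Fin 2) (BQAlg K a b c d e)) d * Δ)
    = !![-(r' * s' * t' - t' * s' * r'), 0; 0, -(r' * s' * t' - t' * s' * r')] := by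
  have hrr : r' * r' = Am a := bq_rr a b c d e
  have hsr : s' * r' = Am b - r' * s' := by rw [← bq_rs a b c d e]; abel
  have htr : t' * r' = Am c - r' * t' - s' * s' := by rw [← bq_rt a b c d e]; abel
  have hts : t' * s' = Am d - s' * t' := by rw [← bq_st a b c d e]; abel
  have htt : t' * t' = Am e := bq_tt a b c d e
  have hrr' : ∀ x, r' * (r' * x) = Am a * x := by
    intro x; rw [← mul_assoc, hrr]
  have hsr' : ∀ x, s' * (r' * x) = Am b * x - r' * (s' * x) := by
    intro x; rw [← mul_assoc, hsr, sub_mul, mul_assoc]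
  have htr' : ∀ x, t' * (r' * x) = Am c * x - r' * (t' * x) - s' * (s' * x) := by
    intro x; rw [← mul_assoc, htr, sub_mul, sub_mul, mul_assoc, mul_assoc]
  have hts' : ∀ x, t' * (s' * x) = Am d * x - s' * (t' * x) := by
    intro x; rw [← mul_assoc, hts, sub_mul, mul_assoc]
  have htt' : ∀ x, t' * (t' * x) = Am e * x := by
    intro x; rw [← mul_assoc, htt]
  have halg : ∀ (k : K) (x y : BQAlg K a b c d e), x * (Am k * y) = Am k * (x * y) := by
    intro k x y; rw [← mul_assoc, ← Algebra.commutes, mul_assoc]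
  have halg2 : ∀ (k : K) (x : BQAlg K a b c d e), x * Am k = Am k * x := fun k x =>
    (Algebra.commutes k x).symm
  have hAd : algebraMap K (Matrix (Fin 2) (Fin 2) (BQAlg K a b c d e)) d * Δ
      = !![Am d * r', 0; 0, Am d * -r'] := by
    rw [← Algebra.smul_def, smulf]
    exact matlit_eq (Algebra.smul_def d r') (smul_zero _) (smul_zero _) (Algebra.smul_def d (-r'))
  have key : Δ * S * (P * S) + P * S * (Δ * S) + (S * Δ * (S * P) + S * P * (S * Δ))
        - algebraMap K (Matrix (Fin 2) (Fin 2) (BQAlg K a b c d e)) d * Δ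
      = !![-(r' * s' * t' - t' * s' * r') + -(r' * s' * t' - t' * s' * r'), 0;
           0, -(r' * s' * t' - t' * s' * r') + -(r' * s' * t' - t' * s' * r')] := by
    rw [hAd]
    simp only [Matrix.mul_fin_two]
    simp only [addf, subf]
    refine matlit_eq ?_ ?_ ?_ ?_ <;>
      · simp only [mul_zero, zero_mul, mul_one, one_mul, add_zero, zero_add, mul_neg, neg_mul,
          mul_add, add_mul, mul_sub, sub_mul, mul_assoc]
        simp only [hrr', hsr', htr', hts', htt', hrr, hsr, htr, hts, htt, halg, halg2,
          mul_sub, sub_mul, mul_add, add_mul, mul_zero, zero_mul, mul_one, one_mul, mul_assoc]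
        noncomm_ring
  rw [key, smulf]
  exact matlit_eq
    (by rw [← two_smul K, smul_smul, inv_mul_cancel₀ h2, one_smul])
    (smul_zero _) (smul_zero _)
    (by rw [← two_smul K, smul_smul, inv_mul_cancel₀ h2, one_smul])

end MatComputations

section Main
variable {K : Type*} [Field K] (a b c d e : K)
local notation "qav" => (![1,0,0,0,0,0,0,0,-1,0] : Fin 10 → K)
local notation "qbv" => (![0,0,-b,-d,1,0,0,-a,-c,-e] : Fin 10 → K)
local notation "r'" => bqR K a b c d e
local notation "s'" => bqS K a b c d e
local notation "t'" => bqT K a b c d e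
local notation "pp" => qiP K qav qbv
local notation "qq" => qiQ K qav qbv
local notation "rr" => qiR K qav qbv
local notation "ss" => qiS K qav qbv

set_option maxHeartbeats 1000000 in
lemma main_part2 (h2 : (2:K) ≠ 0)
    (θ : QIAlg K qav qbv ≃ₐ[K] Matrix (Fin 2) (Fin 2) (BQAlg K a b c d e))
    (hp : θ pp = !![0, 1; 0, 0]) (hq : θ qq = !![r', s'; 0, r'])
    (hr : θ rr = !![0, 0; 1, 0]) (hs : θ ss = !![t', 0; s', t'])
    (D : QIAlg K qav qbv →ₗ[K] QIAlg K qav qbv)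
    (hLeib : ∀ u v, D (u * v) = D u * v + u * D v)
    (hDp : D pp = (2:K)⁻¹ • (pp *
        (algebraMap K (QIAlg K qav qbv) (qiD K qav qbv 0 1) * (pp * rr + rr * pp)
          + algebraMap K (QIAlg K qav qbv) (qiD K qav qbv 0 4)
            * (pp * ss + qq * rr + ss * pp + rr * qq)
          + algebraMap K (QIAlg K qav qbv) (qiD K qav qbv 1 4) * (qq * ss + ss * qq))
      - (algebraMap K (QIAlg K qav qbv) (qiD K qav qbv 0 1) * (pp * rr + rr * pp)
          + algebraMap K (QIAlg K qav qbv) (qiD K qav qbv 0 4)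
            * (pp * ss + qq * rr + ss * pp + rr * qq)
          + algebraMap K (QIAlg K qav qbv) (qiD K qav qbv 1 4) * (qq * ss + ss * qq)) * pp))
    (hDs : D ss = 0) :
    θ ((2:K)⁻¹ • D (qiXi K qav qbv))
      = !![-(r' * s' * t' - t' * s' * r'), 0; 0, -(r' * s' * t' - t' * s' * r')] := by
  rw [eps_eq a b c d e] at hDp
  have hD1 : D 1 = 0 := by
    have h := hLeib 1 1
    simp only [mul_one, one_mul] at h
    exact left_eq_add.mp h
  have hDalg : D (algebraMap K (QIAlg K qav qbv) d) = 0 := by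
    rw [Algebra.algebraMap_eq_smul_one, map_smul, hD1, smul_zero]
  have hDps : D (pp * ss) = D pp * ss := by rw [hLeib, hDs, mul_zero, add_zero]
  have hDsp : D (ss * pp) = ss * D pp := by rw [hLeib, hDs, zero_mul, zero_add]
  have hDxi : D (qiXi K qav qbv)
      = D pp * ss * (pp * ss) + pp * ss * (D pp * ss)
        + (ss * D pp * (ss * pp) + ss * pp * (ss * D pp))
        - algebraMap K (QIAlg K qav qbv) d * D pp := by
    rw [xi_eq a b c d e, map_sub, map_add, sq, sq, hLeib (pp * ss) (pp * ss), hDps,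
      hLeib (ss * pp) (ss * pp), hDsp, hLeib (algebraMap K (QIAlg K qav qbv) d) pp,
      hDalg, zero_mul, zero_add]
  have hθDp : θ (D pp) = !![r', 0; 0, -r'] := by
    rw [hDp]
    simp only [map_smul, map_sub, map_mul, map_add, hp, hq, hr, hs]
    exact mat_delta a b c d e h2
  rw [map_smul, hDxi]
  simp only [map_sub, map_add, map_mul, AlgEquiv.commutes, hp, hs, hθDp]
  exact mat_eta a b c d e h2

end Main
set_option synthInstance.maxHeartbeats 400000 in
set_option maxHeartbeats 1000000 in
/-- Under the isomorphism `θ : A_f → Mat₂(A_{f'})` (`f` the quadric intersection associated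
to the binary quartic `f'`), the central elements satisfy `θ(ξ) = (ξ'+c)I₂` and
`θ(η) = −η'I₂`, where `η = ½Dξ` for the canonical derivation `D` of `A_f`. -/
theorem qi_iso_central_elements (K : Type*) [Field K] (h2 : (2 : K) ≠ 0) (h3 : (3 : K) ≠ 0)
    (a b c d e : K) :
    letI qa : Fin 10 → K := ![1, 0, 0, 0, 0, 0, 0, 0, -1, 0]
    letI qb : Fin 10 → K := ![0, 0, -b, -d, 1, 0, 0, -a, -c, -e]
    letI r' := bqR K a b c d e
    letI s' := bqS K a b c d e
    letI t' := bqT K a b c d e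
    letI ξ' : BQAlg K a b c d e := s' ^ 2 - algebraMap K _ c
    letI η' : BQAlg K a b c d e := r' * s' * t' - t' * s' * r'
    letI p := qiP K qa qb
    letI q := qiQ K qa qb
    letI r := qiR K qa qb
    letI s := qiS K qa qb
    ∀ θ : QIAlg K qa qb ≃ₐ[K] Matrix (Fin 2) (Fin 2) (BQAlg K a b c d e),
      θ p = !![0, 1; 0, 0] →
      θ q = !![r', s'; 0, r'] →
      θ r = !![0, 0; 1, 0] →
      θ s = !![t', 0; s', t'] →
      θ (qiXi K qa qb) = !![ξ' + algebraMap K _ c, 0; 0, ξ' + algebraMap K _ c] ∧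
      ∀ D : QIAlg K qa qb →ₗ[K] QIAlg K qa qb,
        (∀ u v, D (u * v) = D u * v + u * D v) →
        (letI ε : QIAlg K qa qb :=
          algebraMap K _ (qiD K qa qb 0 1) * (p * r + r * p)
          + algebraMap K _ (qiD K qa qb 0 4) * (p * s + q * r + s * p + r * q)
          + algebraMap K _ (qiD K qa qb 1 4) * (q * s + s * q)
         D p = (2 : K)⁻¹ • (p * ε - ε * p) ∧ D q = (2 : K)⁻¹ • (q * ε - ε * q) ∧
           D r = 0 ∧ D s = 0) →
        θ ((2 : K)⁻¹ • D (qiXi K qa qb)) = !![-η', 0; 0, -η'] := by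
  intro θ hp hq hr hs
  refine ⟨?_, ?_⟩
  · rw [xi_eq a b c d e]
    simp only [map_sub, map_add, map_pow, map_mul, AlgEquiv.commutes, hp, hs]
    rw [sub_add_cancel]
    exact mat_xi a b c d e
  · intro D hLeib hD
    exact main_part2 a b c d e h2 θ hp hq hr hs D hLeib hD.1 hD.2.2.2
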